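/- arXiv:1208.2760 — 2 statements merged into one kernel-verified Lean document; each statement's English description precedes it below -/
import Mathlib

section
/- In the construction of A, if (α(x),α(x+1)) ∈ B_C then p_C(α(x)) + p_C(α(x+1)) = p_C(F̃(α)(x)) + p_C(F̃(α)(x+1)); and if (α(x−1),α(x)) ∉ B_C and (α(x),α(x+1)) ∉ B_C then p_C(α(x)) = p_C(F̃(α)(x)). -/
open scoped Classical

noncomputable section

/-- Heavy-particle part of a state: `p_C(q) = 2·sR·(q / (2·sR))`. -/
def pC (sR q : ℕ) : ℕ := 2 * sR * (q / (2 * sR))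

/-- Light-particle part of a state: `p_R(q) = q mod (2·sR)`. -/
def pR (sR q : ℕ) : ℕ := q % (2 * sR)

/-- All heavy particles `C̃ = {2k·sR : 0 ≤ k ≤ 2sC−1}`. -/
def Ctil (sC sR : ℕ) : Set ℕ := {c | ∃ k < 2 * sC, c = 2 * k * sR}

/-- All light particles `R̃ = {0,…,2sR−1}`. -/
def Rtil (sR : ℕ) : Set ℕ := {r | r < 2 * sR}

/-- `Ĉ = {2k·sR : 0 ≤ k ≤ sC−1}`. -/
def Chat (sC sR : ℕ) : Set ℕ := {c | ∃ k < sC, c = 2 * k * sR}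

/-- `Č = {2(k+sC)·sR : 0 ≤ k ≤ sC−1}`. -/
def Ccheck (sC sR : ℕ) : Set ℕ := {c | ∃ k < sC, c = 2 * (k + sC) * sR}

/-- `R̂ = {0,…,sR−1}`. -/
def Rhat (sR : ℕ) : Set ℕ := {r | r < sR}

/-- `Ř = {sR,…,2sR−1}`. -/
def Rcheck (sR : ℕ) : Set ℕ := {r | sR ≤ r ∧ r < 2 * sR}

/-- Balanced pair of states w.r.t. heavy particles. -/
def BC (sC sR q1 q2 : ℕ) : Prop :=
  pC sR q1 ∈ Chat sC sR ∧ pC sR q2 ∈ Ccheck sC sR ∧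
    pC sR q1 + pC sR q2 = 2 * (2 * sC - 1) * sR

/-- Balanced pair of states w.r.t. light particles. -/
def BR (sR q1 q2 : ℕ) : Prop :=
  pR sR q1 ∈ Rhat sR ∧ pR sR q2 ∈ Rcheck sR ∧
    pR sR q1 + pR sR q2 = 2 * sR - 1

/-- `φ̂_C : C → Ĉ` built from an arbitrary bijection `φC` of `C = Fin sC`. -/
def phatC (sC sR : ℕ) (φC : Fin sC ≃ Fin sC) (c : Fin sC) : ℕ := 2 * (φC c : ℕ) * sR

/-- `φ̂_R : R → R̂` built from an arbitrary bijection `φR` of `R = Fin sR`. -/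
def phatR (sR : ℕ) (φR : Fin sR ≃ Fin sR) (r : Fin sR) : ℕ := (φR r : ℕ)

/-- `φ̌_C(c) = 2(2sC−1)sR − φ̂_C(c)`. -/
def pcheckC (sC sR : ℕ) (φC : Fin sC ≃ Fin sC) (c : Fin sC) : ℕ :=
  2 * (2 * sC - 1) * sR - phatC sC sR φC c

/-- `φ̌_R(r) = 2sR−1 − φ̂_R(r)`. -/
def pcheckR (sR : ℕ) (φR : Fin sR ≃ Fin sR) (r : Fin sR) : ℕ :=
  2 * sR - 1 - phatR sR φR r

/-- `φ̂(c,r) = φ̂_C(c) + φ̂_R(r)`. -/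
def phat (sC sR : ℕ) (φC : Fin sC ≃ Fin sC) (φR : Fin sR ≃ Fin sR)
    (q : Fin sC × Fin sR) : ℕ := phatC sC sR φC q.1 + phatR sR φR q.2

/-- `φ̌(c,r) = φ̌_C(c) + φ̌_R(r)`. -/
def pcheck (sC sR : ℕ) (φC : Fin sC ≃ Fin sC) (φR : Fin sR ≃ Fin sR)
    (q : Fin sC × Fin sR) : ℕ := pcheckC sC sR φC q.1 + pcheckR sR φR q.2

/-- `Q̂ = {ĉ + r̂ : ĉ ∈ Ĉ, r̂ ∈ R̂}`. -/
def Qhat (sC sR : ℕ) : Set ℕ := {q | ∃ c ∈ Chat sC sR, ∃ r ∈ Rhat sR, q = c + r}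

/-- `Q̌ = {č + ř : č ∈ Č, ř ∈ Ř}`. -/
def Qcheck (sC sR : ℕ) : Set ℕ := {q | ∃ c ∈ Ccheck sC sR, ∃ r ∈ Rcheck sR, q = c + r}

/-- `φ̂_C⁻¹` applied to a heavy particle (given as a natural number). -/
def decC (sC sR : ℕ) [NeZero sC] (φC : Fin sC ≃ Fin sC) (c : ℕ) : Fin sC :=
  φC.symm ⟨(c / (2 * sR)) % sC, Nat.mod_lt _ (Nat.pos_of_ne_zero (NeZero.ne sC))⟩

/-- `φ̂_R⁻¹` applied to a light particle (given as a natural number). -/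
def decR (sR : ℕ) [NeZero sR] (φR : Fin sR ≃ Fin sR) (r : ℕ) : Fin sR :=
  φR.symm ⟨r % sR, Nat.mod_lt _ (Nat.pos_of_ne_zero (NeZero.ne sR))⟩

/-- The three-case local function `f̃` of the 4-neighbor RNCCA `A`. -/
def ftil (sC sR : ℕ) [NeZero sC] [NeZero sR] (φC : Fin sC ≃ Fin sC) (φR : Fin sR ≃ Fin sR)
    (f : Fin sC × Fin sR → Fin sC × Fin sR) (qm2 qm1 q0 q1 : ℕ) : ℕ :=
  if BR sR qm1 q0 ∧ BC sC sR q0 q1 then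
    phat sC sR φC φR (f (decC sC sR φC (pC sR q0), decR sR φR (pR sR qm1)))
  else if BR sR qm2 qm1 ∧ BC sC sR qm1 q0 then
    pcheck sC sR φC φR (f (decC sC sR φC (pC sR qm1), decR sR φR (pR sR qm2)))
  else pC sR q0 + pR sR qm1

/-- Global function `F̃` of `A` with neighborhood `(−2,−1,0,1)`. -/
def Ftil (sC sR : ℕ) [NeZero sC] [NeZero sR] (φC : Fin sC ≃ Fin sC) (φR : Fin sR ≃ Fin sR)
    (f : Fin sC × Fin sR → Fin sC × Fin sR) (α : ℤ → ℕ) (x : ℤ) : ℕ :=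
  ftil sC sR φC φR f (α (x - 2)) (α (x - 1)) (α x) (α (x + 1))

/-- The encoding `τ̃`: `τ̃(α)(2x) = φ̂(α(x))`, `τ̃(α)(2x+1) = φ̌(α(x))`. -/
def tenc (sC sR : ℕ) (φC : Fin sC ≃ Fin sC) (φR : Fin sR ≃ Fin sR)
    (α : ℤ → Fin sC × Fin sR) (y : ℤ) : ℕ :=
  if Even y then phat sC sR φC φR (α (y / 2)) else pcheck sC sR φC φR (α ((y - 1) / 2))

/-- Global function of the 2-neighbor PCA `P` with neighborhood `(0,−1)`. -/
def FP {C R : Type*} (f : C × R → C × R) (α : ℤ → C × R) (x : ℤ) : C × R :=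
  f ((α x).1, (α (x - 1)).2)

end

/-! The only branches of `f̃` that change a heavy part fire on a balanced pair
`(α x, α (x+1)) ∈ B_C`: they write `φ̂(q)` at `x` and `φ̌(q)` at `x + 1` for the same `q`, and the
heavy parts of these again add up to `2(2sC−1)sR`. Every other cell keeps its heavy part. Since
`Ĉ` and `Č` are disjoint, balanced pairs never overlap, so no cell sees two of these branches. -/

section HeavyPart

variable {sC sR : ℕ}

lemma pC_two_mul_add {k r : ℕ} (hr : r < 2 * sR) : pC sR (2 * sR * k + r) = 2 * sR * k := by
  rw [pC, Nat.mul_add_div (by omega), Nat.div_eq_of_lt hr, Nat.add_zero]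

lemma pC_pC_add_pR (q r : ℕ) : pC sR (pC sR q + pR sR r) = pC sR q := by
  rcases Nat.eq_zero_or_pos sR with rfl | hsR
  · simp [pC]
  · exact pC_two_mul_add (Nat.mod_lt _ (by omega))

lemma pC_phat (φC : Fin sC ≃ Fin sC) (φR : Fin sR ≃ Fin sR) (q : Fin sC × Fin sR) :
    pC sR (phat sC sR φC φR q) = 2 * sR * (φC q.1 : ℕ) := by
  have hr := (φR q.2).isLt
  rw [phat, phatC, phatR, show 2 * (φC q.1 : ℕ) * sR = 2 * sR * (φC q.1 : ℕ) by ring,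
    pC_two_mul_add (by omega)]

lemma pC_pcheck (φC : Fin sC ≃ Fin sC) (φR : Fin sR ≃ Fin sR) (q : Fin sC × Fin sR) :
    pC sR (pcheck sC sR φC φR q) = 2 * sR * (2 * sC - 1 - (φC q.1 : ℕ)) := by
  have hr := (φR q.2).isLt
  have hC : 2 * (2 * sC - 1) * sR - 2 * (φC q.1 : ℕ) * sR
      = 2 * sR * (2 * sC - 1 - (φC q.1 : ℕ)) := by
    rw [show 2 * (2 * sC - 1) * sR = 2 * sR * (2 * sC - 1) by ring,
      show 2 * (φC q.1 : ℕ) * sR = 2 * sR * (φC q.1 : ℕ) by ring, ← Nat.mul_sub]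
  rw [pcheck, pcheckC, pcheckR, phatC, phatR, hC, pC_two_mul_add (by omega)]

lemma pC_phat_add_pC_pcheck (φC : Fin sC ≃ Fin sC) (φR : Fin sR ≃ Fin sR)
    (q : Fin sC × Fin sR) :
    pC sR (phat sC sR φC φR q) + pC sR (pcheck sC sR φC φR q) = 2 * (2 * sC - 1) * sR := by
  have hc := (φC q.1).isLt
  rw [pC_phat, pC_pcheck, ← Nat.mul_add, Nat.add_sub_cancel' (by omega)]
  ring

lemma disjoint_Chat_Ccheck [NeZero sR] : Disjoint (Chat sC sR) (Ccheck sC sR) := by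
  have hsR : 0 < sR := Nat.pos_of_ne_zero (NeZero.ne sR)
  rw [Set.disjoint_left]
  rintro _ ⟨k, hk, rfl⟩ ⟨k', -, he⟩
  have : k = k' + sC := Nat.eq_of_mul_eq_mul_right hsR
    (Nat.eq_of_mul_eq_mul_left two_pos (by linarith [he]))
  omega

end HeavyPart

section BalancedPairs

variable {sC sR : ℕ} [NeZero sR] {q0 q1 : ℕ}

lemma BC.not_BC_right (h : BC sC sR q0 q1) (q2 : ℕ) : ¬ BC sC sR q1 q2 :=
  fun h' => disjoint_Chat_Ccheck.notMem_of_mem_left h'.1 h.2.1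

lemma BC.not_BC_left (h : BC sC sR q0 q1) (q : ℕ) : ¬ BC sC sR q q0 :=
  fun h' => disjoint_Chat_Ccheck.notMem_of_mem_left h.1 h'.2.1

end BalancedPairs

section LocalRule

variable {sC sR : ℕ} [NeZero sC] [NeZero sR] (φC : Fin sC ≃ Fin sC) (φR : Fin sR ≃ Fin sR)
  (f : Fin sC × Fin sR → Fin sC × Fin sR)

lemma pC_ftil_of_not_BC {qm2 qm1 q0 q1 : ℕ} (hleft : ¬ BC sC sR qm1 q0)
    (hright : ¬ BC sC sR q0 q1) :
    pC sR (ftil sC sR φC φR f qm2 qm1 q0 q1) = pC sR q0 := by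
  rw [ftil, if_neg (fun h => hright h.2), if_neg (fun h => hleft h.2), pC_pC_add_pR]

lemma pC_ftil_add_pC_ftil_of_BC {qm2 qm1 q0 q1 q2 : ℕ} (h : BC sC sR q0 q1) :
    pC sR (ftil sC sR φC φR f qm2 qm1 q0 q1) + pC sR (ftil sC sR φC φR f qm1 q0 q1 q2)
      = pC sR q0 + pC sR q1 := by
  by_cases hR : BR sR qm1 q0
  · rw [ftil, ftil, if_pos ⟨hR, h⟩, if_neg (fun h' => h.not_BC_right q2 h'.2), if_pos ⟨hR, h⟩,
      pC_phat_add_pC_pcheck, h.2.2]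
  · rw [ftil, ftil, if_neg (fun h' => hR h'.1), if_neg (fun h' => h.not_BC_left qm1 h'.2),
      if_neg (fun h' => h.not_BC_right q2 h'.2), if_neg (fun h' => hR h'.1),
      pC_pC_add_pR, pC_pC_add_pR]

lemma Ftil_add_one (α : ℤ → ℕ) (x : ℤ) :
    Ftil sC sR φC φR f α (x + 1)
      = ftil sC sR φC φR f (α (x - 1)) (α x) (α (x + 1)) (α (x + 2)) := by
  rw [Ftil, show x + 1 - 2 = x - 1 by ring, add_sub_cancel_right, add_assoc, one_add_one_eq_two]

end LocalRule

theorem stmt8_general (sC sR : ℕ) [NeZero sC] [NeZero sR] (φC : Fin sC ≃ Fin sC)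
    (φR : Fin sR ≃ Fin sR) (f : Fin sC × Fin sR → Fin sC × Fin sR)
    (α : ℤ → ℕ) (x : ℤ) :
    (BC sC sR (α x) (α (x + 1)) →
      pC sR (α x) + pC sR (α (x + 1)) =
        pC sR (Ftil sC sR φC φR f α x) + pC sR (Ftil sC sR φC φR f α (x + 1))) ∧
    (¬ BC sC sR (α (x - 1)) (α x) → ¬ BC sC sR (α x) (α (x + 1)) →
      pC sR (α x) = pC sR (Ftil sC sR φC φR f α x)) := by
  refine ⟨fun h => ?_, fun hleft hright => (pC_ftil_of_not_BC φC φR f hleft hright).symm⟩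
  rw [Ftil_add_one]
  exact (pC_ftil_add_pC_ftil_of_BC φC φR f h).symm

theorem stmt8 (sC sR : ℕ) [NeZero sC] [NeZero sR] (φC : Fin sC ≃ Fin sC)
    (φR : Fin sR ≃ Fin sR) (f : Fin sC × Fin sR → Fin sC × Fin sR)
    (hf : Function.Injective f) (α : ℤ → ℕ)
    (hα : ∀ x : ℤ, α x < 4 * sC * sR) (x : ℤ) :
    (BC sC sR (α x) (α (x + 1)) →
      pC sR (α x) + pC sR (α (x + 1)) =
        pC sR (Ftil sC sR φC φR f α x) + pC sR (Ftil sC sR φC φR f α (x + 1))) ∧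
    (¬ BC sC sR (α (x - 1)) (α x) → ¬ BC sC sR (α x) (α (x + 1)) →
      pC sR (α x) = pC sR (Ftil sC sR φC φR f α x)) :=
  stmt8_general sC sR φC φR f α x
end

section
/- In the construction of A, if (α(x),α(x+1)) ∈ B_R then p_R(α(x)) + p_R(α(x+1)) = p_R(F̃(α)(x+1)) + p_R(F̃(α)(x+2)); and if (α(x−1),α(x)) ∉ B_R and (α(x),α(x+1)) ∉ B_R then p_R(α(x)) = p_R(F̃(α)(x+1)). -/
open scoped Classical

/-!
Away from balanced light pairs `f̃` just copies the light particle of its left neighbour. On a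
balanced pair `(a, b)` the two cells to the right either both copy (giving back `p_R a` and
`p_R b`) or receive the encodings `φ̂ q` and `φ̌ q` of one state `q`, whose light parts again sum
to `2 sR - 1 = p_R a + p_R b`.
-/

section LightParticles

variable {sC sR : ℕ}

lemma pR_phat (φC : Fin sC ≃ Fin sC) (φR : Fin sR ≃ Fin sR) (q : Fin sC × Fin sR) :
    pR sR (phat sC sR φC φR q) = φR q.2 := by
  have hr : (φR q.2 : ℕ) < sR := (φR q.2).isLt
  rw [pR, phat, phatC, phatR, show 2 * (φC q.1 : ℕ) * sR = (φC q.1 : ℕ) * (2 * sR) by ring,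
    Nat.add_comm, Nat.add_mul_mod_self_right, Nat.mod_eq_of_lt (by omega)]

lemma pR_pcheck (φC : Fin sC ≃ Fin sC) (φR : Fin sR ≃ Fin sR) (q : Fin sC × Fin sR) :
    pR sR (pcheck sC sR φC φR q) = 2 * sR - 1 - φR q.2 := by
  have hr : (φR q.2 : ℕ) < sR := (φR q.2).isLt
  have hC : pcheckC sC sR φC q.1 = (2 * sC - 1 - φC q.1) * (2 * sR) := by
    rw [pcheckC, phatC, Nat.sub_mul]
    ring_nf
  rw [pR, pcheck, hC, pcheckR, phatR, Nat.add_comm, Nat.add_mul_mod_self_right,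
    Nat.mod_eq_of_lt (by omega)]

lemma pR_phat_add_pR_pcheck (φC : Fin sC ≃ Fin sC) (φR : Fin sR ≃ Fin sR)
    (q : Fin sC × Fin sR) :
    pR sR (phat sC sR φC φR q) + pR sR (pcheck sC sR φC φR q) = 2 * sR - 1 := by
  have hr : (φR q.2 : ℕ) < sR := (φR q.2).isLt
  rw [pR_phat, pR_pcheck]
  omega

lemma pR_pC_add_pR (a b : ℕ) : pR sR (pC sR a + pR sR b) = pR sR b := by
  rw [pR, pC, pR, Nat.mul_add_mod, Nat.mod_mod_of_dvd _ dvd_rfl]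

lemma not_BR_of_BR_left {a b c : ℕ} (h : BR sR a b) : ¬ BR sR b c := fun h' =>
  absurd (h'.1 : pR sR b < sR) (not_lt.2 h.2.1.1)

lemma not_BR_of_BR_right {a b c : ℕ} (h : BR sR b c) : ¬ BR sR a b :=
  fun h' => not_BR_of_BR_left h' h

end LightParticles

section LocalRule

variable {sC sR : ℕ} [NeZero sC] [NeZero sR] (φC : Fin sC ≃ Fin sC) (φR : Fin sR ≃ Fin sR)
  (f : Fin sC × Fin sR → Fin sC × Fin sR)

lemma pR_ftil_of_not_BR {qm2 qm1 q0 q1 : ℕ} (h₁ : ¬ BR sR qm2 qm1) (h₂ : ¬ BR sR qm1 q0) :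
    pR sR (ftil sC sR φC φR f qm2 qm1 q0 q1) = pR sR qm1 := by
  rw [ftil, if_neg (fun h => h₂ h.1), if_neg (fun h => h₁ h.1), pR_pC_add_pR]

lemma pR_ftil_add_pR_ftil_of_BR {a b c d e : ℕ} (hab : BR sR a b) :
    pR sR (ftil sC sR φC φR f e a b c) + pR sR (ftil sC sR φC φR f a b c d) =
      pR sR a + pR sR b := by
  have hbc : ¬ BR sR b c := not_BR_of_BR_left hab
  by_cases hBC : BC sC sR b c
  · rw [ftil, if_pos ⟨hab, hBC⟩, ftil, if_neg (fun h => hbc h.1), if_pos ⟨hab, hBC⟩,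
      pR_phat_add_pR_pcheck, hab.2.2]
  · have hea : ¬ BR sR e a := not_BR_of_BR_right hab
    rw [ftil, if_neg (fun h => hBC h.2), if_neg (fun h => hea h.1), pR_pC_add_pR,
      ftil, if_neg (fun h => hbc h.1), if_neg (fun h => hBC h.2), pR_pC_add_pR]

end LocalRule

theorem stmt9_general (sC sR : ℕ) [NeZero sC] [NeZero sR] (φC : Fin sC ≃ Fin sC)
    (φR : Fin sR ≃ Fin sR) (f : Fin sC × Fin sR → Fin sC × Fin sR)
    (α : ℤ → ℕ) (x : ℤ) :
    (BR sR (α x) (α (x + 1)) →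
      pR sR (α x) + pR sR (α (x + 1)) =
        pR sR (Ftil sC sR φC φR f α (x + 1)) + pR sR (Ftil sC sR φC φR f α (x + 2))) ∧
    (¬ BR sR (α (x - 1)) (α x) → ¬ BR sR (α x) (α (x + 1)) →
      pR sR (α x) = pR sR (Ftil sC sR φC φR f α (x + 1))) := by
  refine ⟨fun hB => ?_, fun h₁ h₂ => ?_⟩
  · rw [show x + 2 = x + 1 + 1 by ring, Ftil_add_one, Ftil_add_one, add_sub_cancel_right,
      add_assoc, one_add_one_eq_two, pR_ftil_add_pR_ftil_of_BR φC φR f hB]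
  · rw [Ftil_add_one, pR_ftil_of_not_BR φC φR f h₁ h₂]

theorem stmt9 (sC sR : ℕ) [NeZero sC] [NeZero sR] (φC : Fin sC ≃ Fin sC)
    (φR : Fin sR ≃ Fin sR) (f : Fin sC × Fin sR → Fin sC × Fin sR)
    (hf : Function.Injective f) (α : ℤ → ℕ)
    (hα : ∀ x : ℤ, α x < 4 * sC * sR) (x : ℤ) :
    (BR sR (α x) (α (x + 1)) →
      pR sR (α x) + pR sR (α (x + 1)) =
        pR sR (Ftil sC sR φC φR f α (x + 1)) + pR sR (Ftil sC sR φC φR f α (x + 2))) ∧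
    (¬ BR sR (α (x - 1)) (α x) → ¬ BR sR (α x) (α (x + 1)) →
      pR sR (α x) = pR sR (Ftil sC sR φC φR f α (x + 1))) :=
  stmt9_general sC sR φC φR f α x
end
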